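/- Let B⟨X⟩, ∂, ∂*, N be as above and N₂ = N⊗id + id⊗N + id on B⟨X⟩⊗B⟨X⟩. Then ∂∘N = N₂∘∂; equivalently, ∂∘N = (N⊗id + id⊗N + id)∘∂ on B⟨X⟩. -/
import Mathlib


open scoped TensorProduct

noncomputable section

/-- `(A, ι, X)` is the free product `B *_ℂ ℂ⟨X⟩`, characterized by its universal
property: every algebra map `φ : B → C` together with a choice of element `x ∈ C`
extends uniquely to an algebra map `A → C` sending `X` to `x`. -/
def IsFreeProduct {B A : Type} [Ring B] [Algebra ℂ B] [Ring A] [Algebra ℂ A]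
    (ι : B →ₐ[ℂ] A) (X : A) : Prop :=
  ∀ (C : Type) [Ring C] [Algebra ℂ C], ∀ (φ : B →ₐ[ℂ] C) (x : C),
    ∃! ψ : A →ₐ[ℂ] C, ψ.comp ι = φ ∧ ψ X = x

/-- the monomial `b₀ X b₁ ⋯ X bₙ`, where `bs = [b₁, …, bₙ]`. -/
def mono {B A : Type} [Ring B] [Algebra ℂ B] [Ring A] [Algebra ℂ A]
    (ι : B →ₐ[ℂ] A) (X : A) (b0 : B) (bs : List B) : A :=
  ι b0 * (bs.map (fun b => X * ι b)).prod

/-- the cyclic derivative `δ = μ ∘ σ ∘ ∂` associated with a difference quotient `D`. -/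
def cyclicDer {A : Type} [Ring A] [Algebra ℂ A] (D : A →ₗ[ℂ] A ⊗[ℂ] A) : A →ₗ[ℂ] A :=
  (LinearMap.mul' ℂ A) ∘ₗ (TensorProduct.comm ℂ A A).toLinearMap ∘ₗ D

/-- the operation `u # b`, determined by `(a ⊗ c) # b = a b c`. -/
def sharp {A : Type} [Ring A] [Algebra ℂ A] (u : A ⊗[ℂ] A) (b : A) : A :=
  LinearMap.mul' ℂ A (u * (b ⊗ₜ[ℂ] (1 : A)))

/-- the divergence operator `∂* : u ↦ u # X`, i.e. `(a ⊗ c) ↦ a X c`. -/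
def divg {A : Type} [Ring A] [Algebra ℂ A] (X : A) : A ⊗[ℂ] A →ₗ[ℂ] A :=
  (LinearMap.mul' ℂ A) ∘ₗ (LinearMap.mulRight ℂ (X ⊗ₜ[ℂ] (1 : A)))

/-- the number operator `N = ∂* ∘ ∂`. -/
def numOp {A : Type} [Ring A] [Algebra ℂ A] (X : A) (D : A →ₗ[ℂ] A ⊗[ℂ] A) :
    A →ₗ[ℂ] A :=
  divg X ∘ₗ D

/-- `N₂ = N⊗id + id⊗N + id` on `B⟨X⟩ ⊗ B⟨X⟩`. -/
def numOp2 {A : Type} [Ring A] [Algebra ℂ A] (X : A) (D : A →ₗ[ℂ] A ⊗[ℂ] A) :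
    A ⊗[ℂ] A →ₗ[ℂ] A ⊗[ℂ] A :=
  LinearMap.rTensor A (numOp X D) + LinearMap.lTensor A (numOp X D) + LinearMap.id

section aux
variable {A : Type} [Ring A] [Algebra ℂ A] (X : A)

lemma divg_tmul (a c : A) : divg X (a ⊗ₜ[ℂ] c) = a * X * c := by
  simp [divg, LinearMap.mul'_apply, Algebra.TensorProduct.tmul_mul_tmul]

lemma divg_left (p : A) (u : A ⊗[ℂ] A) :
    divg X ((p ⊗ₜ[ℂ] (1 : A)) * u) = p * divg X u := by
  induction u using TensorProduct.induction_on with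
  | zero => simp
  | tmul a c => simp [divg_tmul, Algebra.TensorProduct.tmul_mul_tmul, mul_assoc]
  | add x y hx hy => simp only [mul_add, map_add, hx, hy]

lemma divg_right (q : A) (u : A ⊗[ℂ] A) :
    divg X (u * ((1 : A) ⊗ₜ[ℂ] q)) = divg X u * q := by
  induction u using TensorProduct.induction_on with
  | zero => simp
  | tmul a c => simp [divg_tmul, Algebra.TensorProduct.tmul_mul_tmul, mul_assoc]
  | add x y hx hy => simp only [add_mul, map_add, hx, hy]

variable (D : A →ₗ[ℂ] A ⊗[ℂ] A)
variable (hD : ∀ p q : A, D (p * q) = (p ⊗ₜ[ℂ] (1 : A)) * D q + D p * ((1 : A) ⊗ₜ[ℂ] q))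

include hD

lemma D_one : D (1 : A) = 0 := by
  have := hD 1 1
  simp only [mul_one] at this
  have h2 : D (1:A) = D 1 + D 1 := by
    calc D (1:A) = (1:A) ⊗ₜ[ℂ] (1:A) * D 1 + D 1 * ((1:A) ⊗ₜ[ℂ] (1:A)) := this
    _ = D 1 + D 1 := by rw [← Algebra.TensorProduct.one_def, one_mul, mul_one]
  exact left_eq_add.mp h2

lemma numOp_mul (p q : A) :
    numOp X D (p * q) = p * numOp X D q + numOp X D p * q := by
  simp only [numOp, LinearMap.comp_apply, hD p q, map_add, divg_left, divg_right]

lemma numOp2_left (p : A) (u : A ⊗[ℂ] A) :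
    numOp2 X D ((p ⊗ₜ[ℂ] (1 : A)) * u)
      = (p ⊗ₜ[ℂ] (1 : A)) * numOp2 X D u + ((numOp X D p) ⊗ₜ[ℂ] (1 : A)) * u := by
  induction u using TensorProduct.induction_on with
  | zero => simp
  | tmul a c =>
      simp only [numOp2, Algebra.TensorProduct.tmul_mul_tmul, one_mul, LinearMap.add_apply,
        LinearMap.rTensor_tmul, LinearMap.lTensor_tmul, LinearMap.id_apply,
        numOp_mul X D hD p a, mul_add, TensorProduct.add_tmul]
      abel
  | add x y hx hy =>
      simp only [mul_add, map_add, hx, hy]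
      abel

lemma numOp2_right (q : A) (u : A ⊗[ℂ] A) :
    numOp2 X D (u * ((1 : A) ⊗ₜ[ℂ] q))
      = numOp2 X D u * ((1 : A) ⊗ₜ[ℂ] q) + u * ((1 : A) ⊗ₜ[ℂ] (numOp X D q)) := by
  induction u using TensorProduct.induction_on with
  | zero => simp
  | tmul a c =>
      simp only [numOp2, Algebra.TensorProduct.tmul_mul_tmul, mul_one, LinearMap.add_apply,
        LinearMap.rTensor_tmul, LinearMap.lTensor_tmul, LinearMap.id_apply,
        numOp_mul X D hD c q, mul_add, TensorProduct.tmul_add, add_mul]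
      abel
  | add x y hx hy =>
      simp only [add_mul, map_add, hx, hy]
      abel

end aux

lemma adjoin_eq_top {B A : Type} [Ring B] [Algebra ℂ B] [Ring A] [Algebra ℂ A]
    (ι : B →ₐ[ℂ] A) (X : A) (hfree : IsFreeProduct ι X) :
    Algebra.adjoin ℂ (Set.range ι ∪ {X}) = ⊤ := by
  set S := Algebra.adjoin ℂ (Set.range ι ∪ {X}) with hS
  have hιS : ∀ b, ι b ∈ S := fun b => Algebra.subset_adjoin (Or.inl ⟨b, rfl⟩)
  have hXS : X ∈ S := Algebra.subset_adjoin (Or.inr rfl)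
  obtain ⟨ψ, ⟨hψι, hψX⟩, -⟩ := hfree S (ι.codRestrict S hιS) ⟨X, hXS⟩
  obtain ⟨χ, -, huniq⟩ := hfree A ι X
  have h1 : χ = S.val.comp ψ := by
    refine (huniq _ ⟨?_, ?_⟩).symm
    · ext b
      have := congrArg (fun f => S.val.comp f) hψι
      simpa using congrArg (fun f => f b) this
    · simp [hψX]
  have h2 : χ = AlgHom.id ℂ A := by
    refine (huniq _ ⟨?_, rfl⟩).symm
    ext b; rfl
  have key : S.val.comp ψ = AlgHom.id ℂ A := h1 ▸ h2
  rw [eq_top_iff]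
  intro a _
  have : S.val (ψ a) = a := congrArg (fun f => f a) key
  rw [← this]
  exact (ψ a).2

/-- `∂∘N = (N⊗id + id⊗N + id)∘∂` on `B⟨X⟩`. -/
theorem diffQuot_comp_numOp
    {B A : Type} [Ring B] [Algebra ℂ B] [Ring A] [Algebra ℂ A]
    (ι : B →ₐ[ℂ] A) (X : A) (hfree : IsFreeProduct ι X)
    (D : A →ₗ[ℂ] A ⊗[ℂ] A)
    (hD : ∀ p q : A, D (p * q) = (p ⊗ₜ[ℂ] (1 : A)) * D q + D p * ((1 : A) ⊗ₜ[ℂ] q))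
    (hDX : D X = (1 : A) ⊗ₜ[ℂ] (1 : A))
    (hDB : ∀ b : B, D (ι b) = 0) :
    D ∘ₗ numOp X D = numOp2 X D ∘ₗ D := by
  ext a
  simp only [LinearMap.comp_apply]
  have ha : a ∈ Algebra.adjoin ℂ (Set.range ι ∪ {X}) := by
    rw [adjoin_eq_top ι X hfree]; trivial
  induction ha using Algebra.adjoin_induction with
  | mem x hx =>
      rcases hx with ⟨b, rfl⟩ | hx
      · simp [numOp, hDB b]
      · rw [Set.mem_singleton_iff] at hx
        rw [hx]
        have h1 : D (1 : A) = 0 := D_one D hD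
        have hN1 : numOp X D (1 : A) = 0 := by simp [numOp, h1]
        have hNX : numOp X D X = X := by simp [numOp, hDX, divg_tmul]
        rw [hNX, hDX]
        simp [numOp2, hN1]
  | algebraMap r =>
      have : (algebraMap ℂ A r) = r • (1 : A) := by simp [Algebra.smul_def]
      rw [this]
      simp only [map_smul]
      rw [D_one D hD]
      simp [numOp, D_one D hD]
  | add x y hx hy hx' hy' => simp only [map_add, hx', hy']
  | mul p q hp hq hp' hq' =>
      rw [numOp_mul X D hD p q, map_add, hD p (numOp X D q), hD (numOp X D p) q,
        hD p q, map_add, numOp2_left X D hD, numOp2_right X D hD, hp', hq']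
      abel
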